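/- Let I and J be admissible multi-indices such that at least one of I, J contains a negative entry. Then the product P^I · P^J in B lies in the F_2-linear span of the set of elements P^K, where K ranges over nonempty admissible multi-indices whose final entry is negative. -/

import Mathlib

/-!
The span of the `P^K` with `K` admissible and negative last entry is stable under left
multiplication by every `P^r`: straighten `P^r P^K` with the Adem relations; the last entry is
never touched and the recursion terminates because the leading entries stay bounded. A monomial
with some negative entry is reduced to this case by pushing its last negative entry to the end
through the nonnegative entries behind it.
-/

open scoped BigOperators

/-- The generator `P^s` of the free algebra, for `s : ℤ`. -/
noncomputable def Pfree (s : ℤ) : FreeAlgebra (ZMod 2) ℤ := FreeAlgebra.ι (ZMod 2) s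

/-- The mod 2 binomial coefficient `binom (s-i-1) (r-2i)`, which is zero unless
`0 ≤ r - 2i ≤ s - i - 1`. -/
def ademCoef (r s i : ℤ) : ZMod 2 :=
  if 0 ≤ r - 2*i ∧ r - 2*i ≤ s - i - 1 then ((s - i - 1).toNat.choose (r - 2*i).toNat : ZMod 2)
  else 0

/-- The right hand side `Σ_{i ∈ ℤ} binom(s−i−1, r−2i) P^{r+s−i} P^i` of the Adem relation;
all terms with `i` outside `Finset.Icc (r - s + 1) (r / 2)` have vanishing coefficient. -/
noncomputable def ademRHS (r s : ℤ) : FreeAlgebra (ZMod 2) ℤ :=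
  ∑ i ∈ Finset.Icc (r - s + 1) (r / 2), ademCoef r s i • (Pfree (r + s - i) * Pfree i)

/-- The Adem relations: for `r < 2s`, `P^r P^s` is related to its admissible expansion. -/
inductive AdemRel : FreeAlgebra (ZMod 2) ℤ → FreeAlgebra (ZMod 2) ℤ → Prop
  | rel (r s : ℤ) (h : r < 2*s) : AdemRel (Pfree r * Pfree s) (ademRHS r s)

/-- The algebra `B` of generalized Steenrod operations at the prime 2: the quotient of the
free noncommutative `F₂`-algebra on symbols `P^s`, `s ∈ ℤ`, by the two sided ideal generated
by the Adem relations. -/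
noncomputable abbrev B : Type := RingQuot AdemRel

/-- The class of a generator `P^s` in `B`. -/
noncomputable def P (s : ℤ) : B := RingQuot.mkAlgHom (ZMod 2) AdemRel (Pfree s)

/-- The monomial `P^I = P^{i₁} ⋯ P^{iₙ}` in `B` associated to a multi-index `I`. -/
noncomputable def PI (I : List ℤ) : B := (I.map P).prod

/-- A multi-index `I = (i₁, …, iₙ)` is admissible if `iⱼ ≥ 2 i_{j+1}` for all `j`. -/
def Admissible (I : List ℤ) : Prop := I.Chain' (fun a b => 2*b ≤ a)

/-- The excess `e(I) = i₁ − i₂ − ⋯ − iₙ` of a (nonempty) multi-index. -/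
def excess : List ℤ → ℤ
  | [] => 0
  | a :: l => a - l.sum

lemma PI_cons (a : ℤ) (l : List ℤ) : PI (a :: l) = P a * PI l := by
  simp [PI]

lemma PI_append (l₁ l₂ : List ℤ) : PI (l₁ ++ l₂) = PI l₁ * PI l₂ := by
  simp [PI]

lemma List.getLast!_cons_cons {α : Type*} [Inhabited α] (a b : α) (l : List α) :
    (a :: b :: l).getLast! = (b :: l).getLast! := by
  simp

lemma admissible_cons_cons {a b : ℤ} {l : List ℤ} :
    Admissible (a :: b :: l) ↔ 2 * b ≤ a ∧ Admissible (b :: l) :=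
  List.isChain_cons_cons

lemma Submodule.mul_mem_of_mem_span {R A : Type*} [CommSemiring R] [Semiring A] [Algebra R A]
    {M : Submodule R A} {s : Set A} {c x : A} (hx : x ∈ Submodule.span R s)
    (h : ∀ y ∈ s, c * y ∈ M) : c * x ∈ M :=
  (Submodule.map_span_le (LinearMap.mulLeft R c) s M).mpr h (Submodule.mem_map_of_mem hx)

lemma P_mul_P_of_lt (r s : ℤ) (h : r < 2 * s) :
    P r * P s = ∑ i ∈ Finset.Icc (r - s + 1) (r / 2), ademCoef r s i • (P (r + s - i) * P i) := by
  simpa [P, ademRHS, map_sum, map_mul] using RingQuot.mkAlgHom_rel (ZMod 2) (AdemRel.rel r s h)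

-- `2i ≤ r < s + i` is the range of `i` where the Adem coefficient `binom(s-i-1, r-2i)` can be odd.
lemma P_mul_P_mul_mem {r s : ℤ} (h : r < 2 * s) {y : B} {M : Submodule (ZMod 2) B}
    (hM : ∀ i, 2 * i ≤ r → r < s + i → P (r + s - i) * (P i * y) ∈ M) :
    P r * (P s * y) ∈ M := by
  rw [← mul_assoc, P_mul_P_of_lt r s h, Finset.sum_mul]
  refine Submodule.sum_mem _ fun i _ => ?_
  rw [smul_mul_assoc, mul_assoc]
  by_cases hi : 0 ≤ r - 2 * i ∧ r - 2 * i ≤ s - i - 1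
  · exact Submodule.smul_mem _ _ (hM i (by omega) (by omega))
  · rw [ademCoef, if_neg hi, zero_smul]
    exact M.zero_mem

def negSpan : Submodule (ZMod 2) B :=
  Submodule.span (ZMod 2) {x | ∃ K : List ℤ, K ≠ [] ∧ Admissible K ∧ K.getLast! < 0 ∧ x = PI K}

def leadingSpan (n : ℕ) (b : ℤ) : Submodule (ZMod 2) B :=
  Submodule.span (ZMod 2) {x | ∃ k K, Admissible (k :: K) ∧ (k :: K).getLast! < 0 ∧
    K.length = n ∧ k ≤ b ∧ x = PI (k :: K)}

lemma PI_mem_leadingSpan {k b : ℤ} {K : List ℤ} (hadm : Admissible (k :: K))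
    (hlast : (k :: K).getLast! < 0) (hk : k ≤ b) : PI (k :: K) ∈ leadingSpan K.length b :=
  Submodule.subset_span ⟨k, K, hadm, hlast, rfl, hk, rfl⟩

lemma leadingSpan_mono (n : ℕ) {b b' : ℤ} (h : b ≤ b') : leadingSpan n b ≤ leadingSpan n b' :=
  Submodule.span_mono fun _ ⟨k, K, hadm, hlast, hlen, hk, hx⟩ =>
    ⟨k, K, hadm, hlast, hlen, hk.trans h, hx⟩

lemma leadingSpan_le_negSpan (n : ℕ) (b : ℤ) : leadingSpan n b ≤ negSpan :=
  Submodule.span_mono fun _ ⟨k, K, hadm, hlast, _, _, hx⟩ =>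
    ⟨k :: K, List.cons_ne_nil k K, hadm, hlast, hx⟩

/- Recursion on `(T.length, 2k - r)`. If `r < 2k`, the Adem relation gives terms
`P^(r+k-i) (P^i P^T)` with `i < k`; straightening `P^i P^T` yields leading entries `k' < k`
(this is what the bound `max r (2k - 1)` records), so `2k' - (r+k-i) < 2k - r`. -/
lemma P_mul_PI_mem_leadingSpan (r k : ℤ) (T : List ℤ) (hadm : Admissible (k :: T))
    (hlast : (k :: T).getLast! < 0) :
    P r * PI (k :: T) ∈ leadingSpan (T.length + 1) (max r (2 * k - 1)) := by
  by_cases hrk : 2 * k ≤ r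
  · have hadm' : Admissible (r :: k :: T) := admissible_cons_cons.mpr ⟨hrk, hadm⟩
    have hlast' : (r :: k :: T).getLast! < 0 := by rwa [List.getLast!_cons_cons]
    simpa only [PI_cons, List.length_cons] using
      PI_mem_leadingSpan hadm' hlast' (le_max_left r (2 * k - 1))
  rw [PI_cons]
  refine P_mul_P_mul_mem (by omega) fun i hir hrki => ?_
  cases T with
  | nil =>
    have hk : k < 0 := by simpa using hlast
    have hadm' : Admissible [r + k - i, i] :=
      admissible_cons_cons.mpr ⟨by omega, List.isChain_singleton i⟩
    have hlast' : [r + k - i, i].getLast! < 0 := by simp; omega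
    simpa only [PI_cons, List.length_cons, List.length_nil] using
      PI_mem_leadingSpan hadm' hlast' (b := max r (2 * k - 1)) (by omega)
  | cons t T' =>
    obtain ⟨htk, hadm'⟩ := admissible_cons_cons.mp hadm
    rw [List.getLast!_cons_cons] at hlast
    refine Submodule.mul_mem_of_mem_span (P_mul_PI_mem_leadingSpan i t T' hadm' hlast) ?_
    rintro _ ⟨k', K', hadm'', hlast'', hlen, hk', rfl⟩
    have hk'k : k' ≤ k - 1 := by omega
    exact leadingSpan_mono _ (by omega)
      (hlen ▸ P_mul_PI_mem_leadingSpan (r + k - i) k' K' hadm'' hlast'')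
termination_by (T.length, (2 * k - r).toNat)
decreasing_by
  all_goals subst_vars
  · exact Prod.Lex.left _ _ (by simp)
  · rw [hlen]
    exact Prod.Lex.right _ (by omega)

lemma P_mul_mem_negSpan (r : ℤ) {x : B} (hx : x ∈ negSpan) : P r * x ∈ negSpan := by
  refine Submodule.mul_mem_of_mem_span hx ?_
  rintro _ ⟨_ | ⟨k, T⟩, hne, hadm, hlast, rfl⟩
  · exact absurd rfl hne
  · exact leadingSpan_le_negSpan _ _ (P_mul_PI_mem_leadingSpan r k T hadm hlast)

-- For `m < 0 ≤ t` every term `P^(m+t-i) P^i` of the Adem relation for `P^m P^t` has `i < 0`.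
lemma PI_cons_mem_negSpan {m : ℤ} (hm : m < 0) {C : List ℤ} (hC : ∀ c ∈ C, 0 ≤ c) :
    PI (m :: C) ∈ negSpan := by
  induction C generalizing m with
  | nil => exact Submodule.subset_span ⟨[m], by simp, List.isChain_singleton m, by simpa, rfl⟩
  | cons t C ih =>
    have ht := hC t List.mem_cons_self
    rw [PI_cons, PI_cons]
    refine P_mul_P_mul_mem (by omega) fun i hi _ => P_mul_mem_negSpan _ ?_
    rw [← PI_cons]
    exact ih (by omega) fun c hc => hC c (List.mem_cons_of_mem t hc)

lemma PI_mem_negSpan {L : List ℤ} (hL : ∃ a ∈ L, a < 0) : PI L ∈ negSpan := by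
  induction L with
  | nil => simp at hL
  | cons a L ih =>
    by_cases hL' : ∃ b ∈ L, b < 0
    · rw [PI_cons]
      exact P_mul_mem_negSpan a (ih hL')
    · have ha : a < 0 := by
        simpa only [List.mem_cons, exists_eq_or_imp, hL', or_false] using hL
      push Not at hL'
      exact PI_cons_mem_negSpan ha hL'

theorem statement14_general (I J : List ℤ)
    (hneg : (∃ a ∈ I, a < 0) ∨ ∃ a ∈ J, a < 0) :
    PI I * PI J ∈ Submodule.span (ZMod 2)
      {x : B | ∃ K : List ℤ, K ≠ [] ∧ Admissible K ∧ K.getLast! < 0 ∧ x = PI K} := by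
  rw [← PI_append]
  refine PI_mem_negSpan ?_
  rcases hneg with ⟨a, ha, h⟩ | ⟨a, ha, h⟩ <;> exact ⟨a, by simp [ha], h⟩

/-- **Statement 14.** If `I` and `J` are admissible multi-indices at least one of which contains
a negative entry, then `P^I · P^J` lies in the `F₂`-linear span of the elements `P^K`, where
`K` ranges over nonempty admissible multi-indices whose final entry is negative. -/
theorem statement14 (I J : List ℤ) (hI : Admissible I) (hJ : Admissible J)
    (hneg : (∃ a ∈ I, a < 0) ∨ ∃ a ∈ J, a < 0) :
    PI I * PI J ∈ Submodule.span (ZMod 2)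
      {x : B | ∃ K : List ℤ, K ≠ [] ∧ Admissible K ∧ K.getLast! < 0 ∧ x = PI K} :=
  statement14_general I J hneg
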